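/- For any interval [σ,τ] in the pattern poset, the map π ↦ 1 ⊕ π gives an isomorphism [1^k ⊕ σ, 1^k ⊕ τ] ≅ [1^{k+1} ⊕ σ, 1^{k+1} ⊕ τ] whenever k ≥ |τ| − |σ| − 1. More generally, if τ = 1^ℓ ⊕ τ' for some τ', the isomorphism holds whenever k ≥ |τ| − |σ| − ℓ − 1. -/

import Mathlib

open scoped Classical

/-- The set of all (finite) permutations, as patterns: a permutation of length `n`
together with its length. -/
abbrev PermPt := Σ n : ℕ, Equiv.Perm (Fin n)

/-- Pattern containment order: `σ` occurs in `τ` if there is a strictly monotone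
choice of positions on which `τ` is order-isomorphic to `σ`. -/
def ple (σ τ : PermPt) : Prop :=
  ∃ f : Fin σ.1 → Fin τ.1, StrictMono f ∧
    ∀ a b : Fin σ.1, σ.2 a ≤ σ.2 b ↔ τ.2 (f a) ≤ τ.2 (f b)

/-- Strict pattern containment. -/
def plt (σ τ : PermPt) : Prop := ple σ τ ∧ ¬ ple τ σ

/-- Direct sum of permutations. -/
def pds {m n : ℕ} (α : Equiv.Perm (Fin m)) (β : Equiv.Perm (Fin n)) :
    Equiv.Perm (Fin (m + n)) :=
  finSumFinEquiv.symm.trans ((Equiv.sumCongr α β).trans finSumFinEquiv)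

/-- Skew sum of permutations. -/
def pss {m n : ℕ} (α : Equiv.Perm (Fin m)) (β : Equiv.Perm (Fin n)) :
    Equiv.Perm (Fin (m + n)) :=
  finSumFinEquiv.symm.trans
    (((Equiv.sumCongr α β).trans (Equiv.sumComm (Fin m) (Fin n))).trans
      (finSumFinEquiv.trans (finCongr (Nat.add_comm n m))))

/-- Direct sum, as an operation on `PermPt`. -/
def pdsP (a b : PermPt) : PermPt := ⟨a.1 + b.1, pds a.2 b.2⟩

/-- Skew sum, as an operation on `PermPt`. -/
def pssP (a b : PermPt) : PermPt := ⟨a.1 + b.1, pss a.2 b.2⟩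

/-- The empty permutation. -/
def pempty : PermPt := ⟨0, 1⟩

/-- The permutation `1` of length one. -/
def pone : PermPt := ⟨1, 1⟩

/-- A permutation is decomposable if it is the direct sum of two nonempty
permutations, i.e. some proper nonempty initial segment of positions is mapped
to the corresponding initial segment of values. -/
def Decomp {n : ℕ} (σ : Equiv.Perm (Fin n)) : Prop :=
  ∃ m : ℕ, 0 < m ∧ m < n ∧ ∀ i : Fin n, (i : ℕ) < m → (σ i : ℕ) < m

/-- Disconnectedness of a set of permutations under pattern containment:
it splits into two nonempty parts with no comparabilities between them. -/
def Disconn (S : Set PermPt) : Prop :=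
  ∃ A B : Set PermPt, A ∪ B = S ∧ A.Nonempty ∧ B.Nonempty ∧
    ∀ x ∈ A, ∀ y ∈ B, ¬ ple x y ∧ ¬ ple y x

/-- The identity permutation `1^k` of length `k`. -/
def ones (k : ℕ) : PermPt := ⟨k, 1⟩

/-- `F` is an order isomorphism from the interval `[σ,τ]` onto `[σ',τ']`. -/
def IntervalIso (σ τ σ' τ' : PermPt) (F : PermPt → PermPt) : Prop :=
  (∀ π : PermPt, ple σ π → ple π τ → ple σ' (F π) ∧ ple (F π) τ') ∧
  (∀ ρ : PermPt, ple σ' ρ → ple ρ τ' → ∃ π, ple σ π ∧ ple π τ ∧ ρ = F π) ∧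
  (∀ π π' : PermPt, ple σ π → ple π τ → ple σ π' → ple π' τ →
    (ple π π' ↔ ple (F π) (F π')))

/-!
Prepending a fixed point, `π ↦ 1 ⊕ π`, is an order embedding of the pattern poset
(`1 ⊕ π ≤ 1 ⊕ π'` iff `π ≤ π'`) and carries `[1^k ⊕ σ, 1^k ⊕ τ]` into
`[1^(k+1) ⊕ σ, 1^(k+1) ⊕ τ]`. The content is surjectivity: every `ρ` of the upper interval
starts with a fixed point. Embed `ρ` into `1^(k+1) ⊕ τ = 1^(k+1+ℓ) ⊕ τ'`. If the first entry of
`ρ` lands among the leading ones, it lies below every later entry, so it is the minimum of `ρ`.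
Otherwise all of `ρ` lands in `τ'`, whence `|ρ| ≤ |τ'| ≤ k + 1 + |σ| ≤ |ρ|` and `ρ` is the
bottom `1^(k+1) ⊕ σ` of the interval.
-/

@[simp] lemma pdsP_fst (a b : PermPt) : (pdsP a b).1 = a.1 + b.1 := rfl

@[simp] lemma ones_fst (k : ℕ) : (ones k).1 = k := rfl

@[simp] lemma pone_fst : pone.1 = 1 := rfl

lemma pds_castAdd {m n : ℕ} (α : Equiv.Perm (Fin m)) (β : Equiv.Perm (Fin n)) (i : Fin m) :
    pds α β (Fin.castAdd n i) = Fin.castAdd n (α i) := by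
  simp [pds]

lemma pds_natAdd {m n : ℕ} (α : Equiv.Perm (Fin m)) (β : Equiv.Perm (Fin n)) (j : Fin n) :
    pds α β (Fin.natAdd m j) = Fin.natAdd m (β j) := by
  simp [pds]

namespace PermPt

/-- Positions and values are read as natural numbers (with junk value `0` out of range), so
that `omega` can do the index arithmetic of direct sums. -/
def entry (p : PermPt) (x : ℕ) : ℕ := if h : x < p.1 then p.2 ⟨x, h⟩ else 0

lemma entry_of_lt {p : PermPt} {x : ℕ} (hx : x < p.1) : p.entry x = p.2 ⟨x, hx⟩ :=
  dif_pos hx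

lemma entry_lt {p : PermPt} {x : ℕ} (hx : x < p.1) : p.entry x < p.1 := by
  rw [entry_of_lt hx]
  exact Fin.isLt _

lemma exists_entry_eq_zero {p : PermPt} (hp : 0 < p.1) : ∃ x < p.1, p.entry x = 0 :=
  ⟨p.2.symm ⟨0, hp⟩, Fin.isLt _, by simp [entry_of_lt (Fin.isLt _)]⟩

lemma ext_entry {p q : PermPt} (hlen : p.1 = q.1) (h : ∀ x < p.1, p.entry x = q.entry x) :
    p = q := by
  obtain ⟨n, α⟩ := p
  obtain ⟨m, β⟩ := q
  obtain rfl : n = m := hlen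
  refine congrArg (Sigma.mk n) (Equiv.ext fun i => Fin.ext ?_)
  simpa [entry_of_lt (p := ⟨n, α⟩) i.isLt, entry_of_lt (p := ⟨n, β⟩) i.isLt] using h i i.isLt

lemma entry_pdsP {a b : PermPt} {x : ℕ} (hx : x < a.1 + b.1) :
    (pdsP a b).entry x = if x < a.1 then a.entry x else a.1 + b.entry (x - a.1) := by
  obtain ⟨m, α⟩ := a
  obtain ⟨n, β⟩ := b
  rw [entry_of_lt (p := pdsP _ _) hx]
  change ((pds α β) ⟨x, hx⟩ : ℕ) = _
  split_ifs with h
  · rw [entry_of_lt h, show (⟨x, hx⟩ : Fin (m + n)) = Fin.castAdd n ⟨x, h⟩ from rfl,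
      pds_castAdd]
    rfl
  · have hx' : x - m < n := by simp only at hx h; omega
    rw [entry_of_lt hx', show (⟨x, hx⟩ : Fin (m + n)) = Fin.natAdd m ⟨x - m, hx'⟩ from
      Fin.ext (by simp only [Fin.val_natAdd] at h ⊢; omega), pds_natAdd]
    rfl

lemma entry_pdsP_of_lt {a b : PermPt} {x : ℕ} (hx : x < a.1) :
    (pdsP a b).entry x = a.entry x := by
  rw [entry_pdsP (by omega), if_pos hx]

lemma entry_pdsP_add {a b : PermPt} {x : ℕ} (hx : x < b.1) :
    (pdsP a b).entry (a.1 + x) = a.1 + b.entry x := by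
  rw [entry_pdsP (by omega), if_neg (by omega), Nat.add_sub_cancel_left]

lemma entry_ones (k x : ℕ) : (ones k).entry x = if x < k then x else 0 := by
  unfold entry
  split_ifs with h1 h2 <;> simp only [ones_fst] at h1 <;> first | rfl | omega

end PermPt

open PermPt

lemma ones_add (m n : ℕ) : ones (m + n) = pdsP (ones m) (ones n) :=
  ext_entry rfl fun x hx => by
    simp only [ones_fst] at hx
    rw [entry_pdsP hx]
    simp only [entry_ones, ones_fst]
    split_ifs <;> omega

lemma pdsP_assoc (a b c : PermPt) : pdsP (pdsP a b) c = pdsP a (pdsP b c) :=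
  ext_entry (Nat.add_assoc _ _ _) fun x hx => by
    simp only [pdsP_fst] at hx
    rcases lt_or_ge x a.1 with ha | ha
    · rw [entry_pdsP_of_lt (by simp only [pdsP_fst]; omega), entry_pdsP_of_lt ha,
        entry_pdsP_of_lt ha]
    obtain ⟨y, rfl⟩ := Nat.exists_eq_add_of_le ha
    rw [entry_pdsP_add (a := a) (b := pdsP b c) (by simp only [pdsP_fst]; omega)]
    rcases lt_or_ge y b.1 with hb | hb
    · rw [entry_pdsP_of_lt (by simp only [pdsP_fst]; omega), entry_pdsP_add hb,
        entry_pdsP_of_lt hb]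
    obtain ⟨z, rfl⟩ := Nat.exists_eq_add_of_le hb
    have hc : z < c.1 := by omega
    rw [← Nat.add_assoc, show a.1 + b.1 = (pdsP a b).1 from rfl, entry_pdsP_add hc,
      entry_pdsP_add hc, pdsP_fst, Nat.add_assoc]

lemma ones_zero_pdsP (p : PermPt) : pdsP (ones 0) p = p :=
  ext_entry (Nat.zero_add _) fun x hx => by
    rw [entry_pdsP hx, entry_ones]
    simp

lemma ones_succ_pdsP (k : ℕ) (p : PermPt) :
    pdsP (ones (k + 1)) p = pdsP pone (pdsP (ones k) p) := by
  rw [Nat.add_comm, ones_add, pdsP_assoc]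
  rfl

structure Embeds (p q : PermPt) (f : ℕ → ℕ) : Prop where
  lt_length : ∀ x < p.1, f x < q.1
  lt_of_lt : ∀ x y, x < y → y < p.1 → f x < f y
  entry_le_iff : ∀ x < p.1, ∀ y < p.1,
    (p.entry x ≤ p.entry y ↔ q.entry (f x) ≤ q.entry (f y))

lemma ple_iff_exists_embeds {p q : PermPt} : ple p q ↔ ∃ f, Embeds p q f := by
  constructor
  · rintro ⟨f, hmono, hle⟩
    refine ⟨fun x => if h : x < p.1 then f ⟨x, h⟩ else 0,
      ⟨fun x hx => ?_, fun x y hxy hy => ?_, fun x hx y hy => ?_⟩⟩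
    · simp [hx]
    · simpa [hy, hxy.trans hy] using
        hmono (show (⟨x, hxy.trans hy⟩ : Fin p.1) < ⟨y, hy⟩ from hxy)
    · simp only [hx, hy, ↓reduceDIte, entry_of_lt, Fin.is_lt, Fin.eta]
      exact hle ⟨x, hx⟩ ⟨y, hy⟩
  · rintro ⟨f, hf⟩
    refine ⟨fun i => ⟨f i, hf.lt_length i i.isLt⟩, fun i j hij => hf.lt_of_lt i j hij j.isLt,
      fun i j => ?_⟩
    have := hf.entry_le_iff i i.isLt j j.isLt
    rwa [entry_of_lt i.isLt, entry_of_lt j.isLt, entry_of_lt (hf.lt_length i i.isLt),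
      entry_of_lt (hf.lt_length j j.isLt)] at this

lemma ple_refl (p : PermPt) : ple p p := ⟨id, strictMono_id, fun _ _ => Iff.rfl⟩

lemma ple.length_le {p q : PermPt} (h : ple p q) : p.1 ≤ q.1 := by
  obtain ⟨f, hf, -⟩ := h
  simpa using Fintype.card_le_of_injective f hf.injective

lemma ple.eq_of_length_eq {p q : PermPt} (h : ple p q) (hlen : p.1 = q.1) : p = q := by
  obtain ⟨n, α⟩ := p
  obtain ⟨m, β⟩ := q
  obtain rfl : n = m := hlen
  obtain ⟨f, hf, hle⟩ := h
  obtain rfl : f = id := hf.eq_id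
  have hβα : StrictMono (β ∘ α.symm) := strictMono_of_le_iff_le fun x y => by
    simpa using hle (α.symm x) (α.symm y)
  refine congrArg (Sigma.mk n) (Equiv.ext fun i => ?_)
  simpa using (congrFun hβα.eq_id (α i)).symm

lemma embeds_pdsP {a b c d : PermPt} {f g : ℕ → ℕ} (hf : Embeds a b f) (hg : Embeds c d g) :
    Embeds (pdsP a c) (pdsP b d) (fun x => if x < a.1 then f x else b.1 + g (x - a.1)) := by
  set h := fun x => if x < a.1 then f x else b.1 + g (x - a.1)
  have key : ∀ x < a.1 + c.1,
      (x < a.1 ∧ h x < b.1 ∧ (pdsP a c).entry x = a.entry x ∧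
        (pdsP b d).entry (h x) = b.entry (f x) ∧ a.entry x < a.1 ∧ b.entry (f x) < b.1) ∨
      (a.1 ≤ x ∧ b.1 ≤ h x ∧ h x < b.1 + d.1 ∧ (pdsP a c).entry x = a.1 + c.entry (x - a.1) ∧
        (pdsP b d).entry (h x) = b.1 + d.entry (g (x - a.1))) := by
    intro x hx
    by_cases hxa : x < a.1
    · have hfx := hf.lt_length x hxa
      simp only [h, if_pos hxa]
      exact Or.inl ⟨hxa, hfx, entry_pdsP_of_lt hxa, entry_pdsP_of_lt hfx, entry_lt hxa,
        entry_lt hfx⟩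
    · have hx' : x - a.1 < c.1 := by omega
      have hgx := hg.lt_length _ hx'
      simp only [h, if_neg hxa]
      refine Or.inr ⟨by omega, by omega, by omega, ?_, entry_pdsP_add hgx⟩
      rw [← entry_pdsP_add hx', Nat.add_sub_cancel' (by omega)]
  refine ⟨fun x hx => ?_, fun x y hxy hy => ?_, fun x hx y hy => ?_⟩
  · rcases key x hx with ⟨-, hhx, -⟩ | ⟨-, -, hhx, -⟩ <;> simp only [pdsP_fst] <;> omega
  · simp only [pdsP_fst] at hy
    rcases key x (by omega) with ⟨hx, hhx, -⟩ | ⟨hx, hhx, -⟩ <;>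
      rcases key y hy with ⟨hy', hhy, -⟩ | ⟨hy', hhy, -⟩
    · simpa [h, hx, hy'] using hf.lt_of_lt x y hxy hy'
    · omega
    · omega
    · have := hg.lt_of_lt (x - a.1) (y - a.1) (by omega) (by omega)
      simp only [h, if_neg (show ¬ x < a.1 by omega), if_neg (show ¬ y < a.1 by omega)]
      omega
  · simp only [pdsP_fst] at hx hy
    rcases key x hx with ⟨hx', -, ex, ex', hx1, hx2⟩ | ⟨hx', -, -, ex, ex'⟩ <;>
      rcases key y hy with ⟨hy', -, ey, ey', hy1, hy2⟩ | ⟨hy', -, -, ey, ey'⟩ <;>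
      rw [ex, ex', ey, ey']
    · exact hf.entry_le_iff x hx' y hy'
    · omega
    · omega
    · have := hg.entry_le_iff (x - a.1) (by omega) (y - a.1) (by omega)
      omega

lemma pdsP_mono {a b c d : PermPt} (hab : ple a b) (hcd : ple c d) :
    ple (pdsP a c) (pdsP b d) := by
  obtain ⟨f, hf⟩ := ple_iff_exists_embeds.mp hab
  obtain ⟨g, hg⟩ := ple_iff_exists_embeds.mp hcd
  exact ple_iff_exists_embeds.mpr ⟨_, embeds_pdsP hf hg⟩

lemma Embeds.restrict_right {a p q : PermPt} {f : ℕ → ℕ} (hf : Embeds (pdsP a p) q f) :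
    Embeds p q (fun x => f (a.1 + x)) := by
  have hlt : ∀ {x}, x < p.1 → a.1 + x < (pdsP a p).1 := fun hx => Nat.add_lt_add_left hx _
  refine ⟨fun x hx => hf.lt_length _ (hlt hx),
    fun x y hxy hy => hf.lt_of_lt _ _ (by omega) (hlt hy), fun x hx y hy => ?_⟩
  have := hf.entry_le_iff _ (hlt hx) _ (hlt hy)
  rw [entry_pdsP_add hx, entry_pdsP_add hy] at this
  simpa using this

lemma Embeds.codRestrict_right {ρ a b : PermPt} {f : ℕ → ℕ} (hf : Embeds ρ (pdsP a b) f)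
    (h : ∀ x < ρ.1, a.1 ≤ f x) : Embeds ρ b (fun x => f x - a.1) := by
  have hlt : ∀ x < ρ.1, f x - a.1 < b.1 := fun x hx => by
    have : f x < a.1 + b.1 := hf.lt_length x hx
    have := h x hx
    omega
  have hent : ∀ x < ρ.1, (pdsP a b).entry (f x) = a.1 + b.entry (f x - a.1) := fun x hx => by
    rw [← entry_pdsP_add (hlt x hx), Nat.add_sub_cancel' (h x hx)]
  refine ⟨hlt, fun x y hxy hy => ?_, fun x hx y hy => ?_⟩
  · have := hf.lt_of_lt x y hxy hy
    have := h x (by omega)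
    omega
  · rw [hf.entry_le_iff x hx y hy, hent x hx, hent y hy]
    omega

lemma pone_pdsP_ple_iff {p q : PermPt} : ple (pdsP pone p) (pdsP pone q) ↔ ple p q := by
  refine ⟨fun h => ?_, pdsP_mono (ple_refl pone)⟩
  obtain ⟨f, hf⟩ := ple_iff_exists_embeds.mp h
  refine ple_iff_exists_embeds.mpr ⟨_, hf.restrict_right.codRestrict_right fun x hx => ?_⟩
  have := hf.lt_of_lt 0 (1 + x) (by omega) (by simp only [pdsP_fst, pone_fst]; omega)
  simp only [pone_fst]
  omega

lemma entry_zero_eq_zero_or_ple {ρ τ : PermPt} {K : ℕ} (h : ple ρ (pdsP (ones K) τ))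
    (hρ : 0 < ρ.1) : ρ.entry 0 = 0 ∨ ple ρ τ := by
  obtain ⟨f, hf⟩ := ple_iff_exists_embeds.mp h
  by_cases hK : f 0 < K
  · left
    obtain ⟨j, hj, hj0⟩ := exists_entry_eq_zero hρ
    suffices ρ.entry 0 ≤ ρ.entry j by omega
    rcases Nat.eq_zero_or_pos j with rfl | hj_pos
    · exact le_rfl
    have hf0j := hf.lt_of_lt 0 j hj_pos hj
    rw [hf.entry_le_iff 0 hρ j hj, entry_pdsP (hf.lt_length 0 hρ),
      entry_pdsP (hf.lt_length j hj)]
    simp only [ones_fst, entry_ones, hK, ↓reduceIte]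
    split_ifs <;> omega
  · right
    refine ple_iff_exists_embeds.mpr ⟨_, hf.codRestrict_right fun x hx => ?_⟩
    rcases Nat.eq_zero_or_pos x with rfl | hx_pos
    · simpa using hK
    · have := hf.lt_of_lt 0 x hx_pos hx
      simp only [ones_fst]
      omega

lemma exists_eq_pone_pdsP_of_entry_zero {ρ : PermPt} (hρ : 0 < ρ.1) (h0 : ρ.entry 0 = 0) :
    ∃ π, ρ = pdsP pone π := by
  obtain ⟨_ | n, e⟩ := ρ
  · simp at hρ
  set e' := (Equiv.Perm.decomposeFin e).2
  have he : e = Equiv.Perm.decomposeFin.symm (0, e') := by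
    have h0' : (Equiv.Perm.decomposeFin e).1 = 0 := by
      have := Equiv.Perm.decomposeFin_symm_apply_zero (Equiv.Perm.decomposeFin e).1 e'
      rw [Prod.mk.eta, Equiv.symm_apply_apply] at this
      rw [← this]
      exact Fin.ext (by simpa [entry_of_lt] using h0)
    rw [← h0', Equiv.symm_apply_apply]
  refine ⟨⟨n, e'⟩, ext_entry (Nat.add_comm _ _) fun x hx => ?_⟩
  rcases x with _ | y
  · rw [h0, entry_pdsP_of_lt (by simp)]
    rfl
  · have hy : y < n := by simpa using hx
    have hπ := entry_pdsP_add (a := pone) (b := ⟨n, e'⟩) hy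
    rw [pone_fst, Nat.add_comm 1 y] at hπ
    rw [hπ, entry_of_lt hx, entry_of_lt hy]
    change ((e (Fin.succ ⟨y, hy⟩) : Fin (n + 1)) : ℕ) = _
    rw [he, Equiv.Perm.decomposeFin_symm_apply_succ, Equiv.swap_self, Equiv.refl_apply,
      Fin.val_succ, Nat.add_comm]

lemma exists_eq_pone_pdsP_of_ple {α ρ τ : PermPt} {K : ℕ} (h₁ : ple (pdsP pone α) ρ)
    (h₂ : ple ρ (pdsP (ones K) τ)) (hlen : τ.1 ≤ 1 + α.1) : ∃ π, ρ = pdsP pone π := by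
  have hα := h₁.length_le
  simp only [pdsP_fst, pone_fst] at hα
  rcases entry_zero_eq_zero_or_ple h₂ (by omega) with h0 | hτ
  · exact exists_eq_pone_pdsP_of_entry_zero (by omega) h0
  · exact ⟨α, (h₁.eq_of_length_eq (by have := hτ.length_le; simp; omega)).symm⟩

lemma intervalIso_pone_pdsP {a b : PermPt}
    (h : ∀ ρ, ple (pdsP pone a) ρ → ple ρ (pdsP pone b) → ∃ π, ρ = pdsP pone π) :
    IntervalIso a b (pdsP pone a) (pdsP pone b) (pdsP pone) := by
  refine ⟨fun π ha hb => ⟨pdsP_mono (ple_refl pone) ha, pdsP_mono (ple_refl pone) hb⟩,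
    fun ρ ha hb => ?_, fun π π' _ _ _ _ => pone_pdsP_ple_iff.symm⟩
  obtain ⟨π, rfl⟩ := h ρ ha hb
  exact ⟨π, pone_pdsP_ple_iff.mp ha, pone_pdsP_ple_iff.mp hb, rfl⟩

lemma intervalIso_ones_succ (σ τ' : PermPt) (ℓ k : ℕ) (hk : τ'.1 ≤ k + 1 + σ.1) :
    IntervalIso (pdsP (ones k) σ) (pdsP (ones k) (pdsP (ones ℓ) τ'))
      (pdsP (ones (k + 1)) σ) (pdsP (ones (k + 1)) (pdsP (ones ℓ) τ')) (pdsP pone) := by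
  rw [ones_succ_pdsP, ones_succ_pdsP]
  refine intervalIso_pone_pdsP fun ρ h₁ h₂ => ?_
  rw [← ones_succ_pdsP, ← pdsP_assoc, ← ones_add] at h₂
  exact exists_eq_pone_pdsP_of_ple h₁ h₂ (by simp only [pdsP_fst, ones_fst]; omega)

theorem adding_ones_stabilizes_general (σ τ : PermPt) :
    (∀ k : ℕ, τ.1 - σ.1 - 1 ≤ k →
      IntervalIso (pdsP (ones k) σ) (pdsP (ones k) τ)
        (pdsP (ones (k + 1)) σ) (pdsP (ones (k + 1)) τ)
        (fun π => pdsP pone π)) ∧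
    (∀ (ℓ : ℕ) (τ' : PermPt), τ = pdsP (ones ℓ) τ' →
      ∀ k : ℕ, τ.1 - σ.1 - ℓ - 1 ≤ k →
      IntervalIso (pdsP (ones k) σ) (pdsP (ones k) τ)
        (pdsP (ones (k + 1)) σ) (pdsP (ones (k + 1)) τ)
        (fun π => pdsP pone π)) := by
  refine ⟨fun k hk => ?_, fun ℓ τ' hτ k hk => ?_⟩
  · have := intervalIso_ones_succ σ τ 0 k (by omega)
    rwa [ones_zero_pdsP] at this
  · subst hτ
    exact intervalIso_ones_succ σ τ' ℓ k (by simp only [pdsP_fst, ones_fst] at hk; omega)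

/-- For any interval `[σ,τ]`, the map `π ↦ 1 ⊕ π` gives an isomorphism
`[1^k ⊕ σ, 1^k ⊕ τ] ≅ [1^{k+1} ⊕ σ, 1^{k+1} ⊕ τ]` whenever
`k ≥ |τ| − |σ| − 1`; more generally, if `τ = 1^ℓ ⊕ τ'`, this holds whenever
`k ≥ |τ| − |σ| − ℓ − 1`. -/
theorem adding_ones_stabilizes (σ τ : PermPt) (hστ : ple σ τ) :
    (∀ k : ℕ, τ.1 - σ.1 - 1 ≤ k →
      IntervalIso (pdsP (ones k) σ) (pdsP (ones k) τ)
        (pdsP (ones (k + 1)) σ) (pdsP (ones (k + 1)) τ)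
        (fun π => pdsP pone π)) ∧
    (∀ (ℓ : ℕ) (τ' : PermPt), τ = pdsP (ones ℓ) τ' →
      ∀ k : ℕ, τ.1 - σ.1 - ℓ - 1 ≤ k →
      IntervalIso (pdsP (ones k) σ) (pdsP (ones k) τ)
        (pdsP (ones (k + 1)) σ) (pdsP (ones (k + 1)) τ)
        (fun π => pdsP pone π)) :=
  adding_ones_stabilizes_general σ τ
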